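/- arXiv:2211.04278 — 8 statements merged into one kernel-verified Lean document; each statement's English description precedes it below -/
import Mathlib

section
/- For a graph G with a distinguished vertex subset U, and finite m-structured sets σ, ρ ⊆ ℕ (i.e., all elements of σ are congruent mod m and all elements of ρ are congruent mod m), suppose S_x and S_y are two partial solutions witnessing strings x, y ∈ A^U (where a partial solution S means: every vertex in S \ U has |N(v) ∩ S| ∈ σ and every vertex outside S ∪ U has |N(v) ∩ S| ∈ ρ). If |S_x \ U| ≡ |S_y \ U| (mod m), then the inner product of the σ-vector of x with the m-weight-vector of y is congruent mod m to the inner product of the σ-vector of y with the m-weight-vector of x. Here the σ-vector of x has entry 1 at position v iff x assigns a σ-state at v, and the weight-vector entry at v is the number of selected neighbors of v recorded by x. -/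
theorem stmt_0 {V : Type} [Fintype V] (G : SimpleGraph V) (U : Finset V)
    (σ ρ : Set ℕ) (m : ℕ) (hm : 2 ≤ m)
    (hσfin : σ.Finite) (hρfin : ρ.Finite)
    (hσstr : ∃ a, ∀ s ∈ σ, s % m = a) (hρstr : ∃ b, ∀ r ∈ ρ, r % m = b)
    (x y : V → Bool × ℕ) (Sx Sy : Set V)
    (hSx1 : ∀ v ∈ Sx, v ∉ U → (G.neighborSet v ∩ Sx).ncard ∈ σ)
    (hSx2 : ∀ v : V, v ∉ Sx → v ∉ U → (G.neighborSet v ∩ Sx).ncard ∈ ρ)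
    (hSy1 : ∀ v ∈ Sy, v ∉ U → (G.neighborSet v ∩ Sy).ncard ∈ σ)
    (hSy2 : ∀ v : V, v ∉ Sy → v ∉ U → (G.neighborSet v ∩ Sy).ncard ∈ ρ)
    (hx1 : ∀ v ∈ U, ((x v).1 = true ↔ v ∈ Sx))
    (hx2 : ∀ v ∈ U, (x v).2 = (G.neighborSet v ∩ Sx).ncard)
    (hy1 : ∀ v ∈ U, ((y v).1 = true ↔ v ∈ Sy))
    (hy2 : ∀ v ∈ U, (y v).2 = (G.neighborSet v ∩ Sy).ncard)
    (hcard : (Sx \ (U : Set V)).ncard ≡ (Sy \ (U : Set V)).ncard [MOD m]) :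
    (∑ v ∈ U, (if (x v).1 then 1 else 0) * ((y v).2 % m)) ≡
      (∑ v ∈ U, (if (y v).1 then 1 else 0) * ((x v).2 % m)) [MOD m] := by
  classical
  obtain ⟨a, ha⟩ := hσstr
  obtain ⟨b, hb⟩ := hρstr
  rw [← ZMod.natCast_eq_natCast_iff] at hcard ⊢
  push_cast
  simp only [ZMod.natCast_mod]
  have hσc : ∀ n ∈ σ, (n : ZMod m) = (a : ZMod m) := fun n hn => by
    rw [← ZMod.natCast_mod, ha n hn]
  have hρc : ∀ n ∈ ρ, (n : ZMod m) = (b : ZMod m) := fun n hn => by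
    rw [← ZMod.natCast_mod, hb n hn]
  set F : V → ZMod m := fun v => ((G.neighborSet v ∩ Sy).ncard : ZMod m) with hF
  set Gg : V → ZMod m := fun v => ((G.neighborSet v ∩ Sx).ncard : ZMod m) with hGg
  -- rewrite both sides
  have hLx : ∑ v ∈ U, (if (x v).1 = true then (1:ZMod m) else 0) * ((y v).2 : ZMod m)
      = ∑ v ∈ U, (if v ∈ Sx then F v else 0) := by
    refine Finset.sum_congr rfl fun v hv => ?_
    rw [hy2 v hv]
    by_cases h : v ∈ Sx
    · rw [if_pos ((hx1 v hv).mpr h), if_pos h, one_mul]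
    · rw [if_neg (fun hh => h ((hx1 v hv).mp hh)), if_neg h, zero_mul]
  have hLy : ∑ v ∈ U, (if (y v).1 = true then (1:ZMod m) else 0) * ((x v).2 : ZMod m)
      = ∑ v ∈ U, (if v ∈ Sy then Gg v else 0) := by
    refine Finset.sum_congr rfl fun v hv => ?_
    rw [hx2 v hv]
    by_cases h : v ∈ Sy
    · rw [if_pos ((hy1 v hv).mpr h), if_pos h, one_mul]
    · rw [if_neg (fun hh => h ((hy1 v hv).mp hh)), if_neg h, zero_mul]
  rw [hLx, hLy]
  -- double counting
  have key : ∀ (S : Set V) (v : V), (G.neighborSet v ∩ S).ncard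
      = ∑ u : V, (if G.Adj v u ∧ u ∈ S then 1 else 0) := by
    intro S v
    rw [Set.ncard_eq_toFinset_card', ← Finset.card_filter]
    congr 1
    ext u
    simp [and_comm]
  have hdc : ∑ v : V, (if v ∈ Sx then (G.neighborSet v ∩ Sy).ncard else 0)
      = ∑ v : V, (if v ∈ Sy then (G.neighborSet v ∩ Sx).ncard else 0) := by
    calc ∑ v : V, (if v ∈ Sx then (G.neighborSet v ∩ Sy).ncard else 0)
        = ∑ v : V, ∑ u : V, (if v ∈ Sx ∧ G.Adj v u ∧ u ∈ Sy then 1 else 0) := by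
          refine Finset.sum_congr rfl fun v _ => ?_
          by_cases h : v ∈ Sx
          · simp only [h, if_true, key Sy v, true_and]
          · simp [h]
      _ = ∑ u : V, ∑ v : V, (if v ∈ Sx ∧ G.Adj v u ∧ u ∈ Sy then 1 else 0) :=
          Finset.sum_comm
      _ = ∑ u : V, (if u ∈ Sy then (G.neighborSet u ∩ Sx).ncard else 0) := by
          refine Finset.sum_congr rfl fun u _ => ?_
          by_cases h : u ∈ Sy
          · rw [if_pos h, key Sx u]
            refine Finset.sum_congr rfl fun v _ => ?_
            apply if_congr _ rfl rfl
            rw [G.adj_comm]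
            tauto
          · refine (Finset.sum_eq_zero fun v _ => ?_).trans (if_neg h).symm
            simp [h]
  -- cast double counting
  have hdcZ : ∑ v : V, (if v ∈ Sx then F v else 0)
      = ∑ v : V, (if v ∈ Sy then Gg v else 0) := by
    have := congrArg (Nat.cast : ℕ → ZMod m) hdc
    push_cast at this
    simpa using this
  -- split over U and complement
  rw [← Finset.sum_add_sum_compl U (fun v => if v ∈ Sx then F v else 0),
      ← Finset.sum_add_sum_compl U (fun v => if v ∈ Sy then Gg v else 0)] at hdcZ
  -- evaluate the complement sums
  have hcomplx : ∑ v ∈ Uᶜ, (if v ∈ Sx then F v else 0)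
      = (a : ZMod m) * ((Uᶜ.filter (fun v => v ∈ Sx ∧ v ∈ Sy)).card : ZMod m)
        + (b : ZMod m) * (((Uᶜ.filter (fun v => v ∈ Sx)).card : ZMod m)
            - ((Uᶜ.filter (fun v => v ∈ Sx ∧ v ∈ Sy)).card : ZMod m)) := by
    rw [Finset.sum_congr rfl (g := fun v =>
        (a:ZMod m) * (if v ∈ Sx ∧ v ∈ Sy then 1 else 0)
        + (b:ZMod m) * ((if v ∈ Sx then (1:ZMod m) else 0)
            - (if v ∈ Sx ∧ v ∈ Sy then 1 else 0))) ?_]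
    · rw [Finset.sum_add_distrib, ← Finset.mul_sum, Finset.sum_boole,
        ← Finset.mul_sum, Finset.sum_sub_distrib, Finset.sum_boole, Finset.sum_boole]
    · intro v hv
      rw [Finset.mem_compl] at hv
      by_cases hvx : v ∈ Sx
      · by_cases hvy : v ∈ Sy
        · rw [hF]; simp only [hvx, hvy, and_self, if_true]
          rw [hσc _ (hSy1 v hvy hv)]; ring
        · rw [hF]; simp only [hvx, hvy, and_false, if_true, if_false]
          rw [hρc _ (hSy2 v hvy hv)]; ring
      · simp [hvx]
  have hcomply : ∑ v ∈ Uᶜ, (if v ∈ Sy then Gg v else 0)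
      = (a : ZMod m) * ((Uᶜ.filter (fun v => v ∈ Sx ∧ v ∈ Sy)).card : ZMod m)
        + (b : ZMod m) * (((Uᶜ.filter (fun v => v ∈ Sy)).card : ZMod m)
            - ((Uᶜ.filter (fun v => v ∈ Sx ∧ v ∈ Sy)).card : ZMod m)) := by
    have hsymm : Uᶜ.filter (fun v => v ∈ Sy ∧ v ∈ Sx)
        = Uᶜ.filter (fun v => v ∈ Sx ∧ v ∈ Sy) := by
      apply Finset.filter_congr; intro v _; simp [and_comm]
    rw [Finset.sum_congr rfl (g := fun v =>
        (a:ZMod m) * (if v ∈ Sy ∧ v ∈ Sx then 1 else 0)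
        + (b:ZMod m) * ((if v ∈ Sy then (1:ZMod m) else 0)
            - (if v ∈ Sy ∧ v ∈ Sx then 1 else 0))) ?_]
    · rw [Finset.sum_add_distrib, ← Finset.mul_sum, Finset.sum_boole,
        ← Finset.mul_sum, Finset.sum_sub_distrib, Finset.sum_boole, Finset.sum_boole, hsymm]
    · intro v hv
      rw [Finset.mem_compl] at hv
      by_cases hvy : v ∈ Sy
      · by_cases hvx : v ∈ Sx
        · rw [hGg]; simp only [hvx, hvy, and_self, if_true]
          rw [hσc _ (hSx1 v hvx hv)]; ring
        · rw [hGg]; simp only [hvx, hvy, and_false, if_true, if_false]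
          rw [hρc _ (hSx2 v hvx hv)]; ring
      · simp [hvy]
  -- cardinalities of complements equal mod m
  have hcx : ((Uᶜ.filter (fun v => v ∈ Sx)).card : ℕ) = (Sx \ (U : Set V)).ncard := by
    rw [Set.ncard_eq_toFinset_card']
    congr 1
    ext v
    simp [and_comm]
  have hcy : ((Uᶜ.filter (fun v => v ∈ Sy)).card : ℕ) = (Sy \ (U : Set V)).ncard := by
    rw [Set.ncard_eq_toFinset_card']
    congr 1
    ext v
    simp [and_comm]
  rw [hcomplx, hcomply] at hdcZ
  rw [hcx, hcy] at hdcZ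
  rw [hcard] at hdcZ
  linear_combination hdcZ
end

section
/- Let m ≥ 2 and let L ⊆ A^n satisfy L × L ⊆ R^n (the symmetric inner-product relation modulo m on σ-vectors and m-weight-vectors). Let S ⊆ {1,...,n} be a σ-defining set for L, i.e., an inclusion-minimal set of positions such that any two strings of L whose σ-vectors agree on S have equal σ-vectors. Then for any two strings u, v ∈ L with equal σ-vectors, if their m-weight-vectors agree on the complement of S, then their m-weight-vectors are equal on all positions. -/
def sigvec {n : ℕ} (x : Fin n → Bool × ℕ) (i : Fin n) : ℕ :=
  if (x i).1 then 1 else 0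

def mweight (m : ℕ) {n : ℕ} (x : Fin n → Bool × ℕ) (i : Fin n) : ℕ :=
  (x i).2 % m

def Rrel (m : ℕ) {n : ℕ} (x y : Fin n → Bool × ℕ) : Prop :=
  (∑ i, sigvec x i * mweight m y i) ≡ (∑ i, sigvec y i * mweight m x i) [MOD m]

def validStr (sTop rTop : ℕ) {n : ℕ} (x : Fin n → Bool × ℕ) : Prop :=
  ∀ i, ((x i).1 = true → (x i).2 ≤ sTop) ∧ ((x i).1 = false → (x i).2 ≤ rTop)

/-- `S` is a σ-defining set for `L`: an inclusion-minimal set of positions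
determining the σ-vectors of strings in `L`. -/
def sigmaDefining {n : ℕ} (L : Set (Fin n → Bool × ℕ)) (S : Finset (Fin n)) : Prop :=
  (∀ u ∈ L, ∀ v ∈ L, (∀ i ∈ S, sigvec u i = sigvec v i) → ∀ i, sigvec u i = sigvec v i) ∧
  ∀ S' : Finset (Fin n), S' ⊂ S →
    ¬ (∀ u ∈ L, ∀ v ∈ L, (∀ i ∈ S', sigvec u i = sigvec v i) → ∀ i, sigvec u i = sigvec v i)

theorem stmt_2 {n : ℕ} (m sTop rTop : ℕ) (hm : 2 ≤ m)
    (L : Set (Fin n → Bool × ℕ))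
    (hval : ∀ x ∈ L, validStr sTop rTop x)
    (hR : ∀ x ∈ L, ∀ y ∈ L, Rrel m x y)
    (S : Finset (Fin n)) (hS : sigmaDefining L S)
    (u v : Fin n → Bool × ℕ) (hu : u ∈ L) (hv : v ∈ L)
    (huv : ∀ i, sigvec u i = sigvec v i)
    (hagree : ∀ i, i ∉ S → mweight m u i = mweight m v i) :
    ∀ i, mweight m u i = mweight m v i := by
  haveI : Fact (1 < m) := ⟨hm⟩
  set d : Fin n → ZMod m := fun i => (mweight m u i : ZMod m) - (mweight m v i : ZMod m)
    with hd
  have key : ∀ w ∈ L, ∑ i, (sigvec w i : ZMod m) * d i = 0 := by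
    intro w hw
    have h1 := hR w hw u hu
    have h2 := hR w hw v hv
    unfold Rrel at h1 h2
    have hsum : ((∑ i, sigvec u i * mweight m w i : ℕ) : ZMod m)
        = ((∑ i, sigvec v i * mweight m w i : ℕ) : ZMod m) := by
      have : ∀ i, sigvec u i * mweight m w i = sigvec v i * mweight m w i := by
        intro i; rw [huv i]
      simp only [this]
    have c1 := (ZMod.natCast_eq_natCast_iff _ _ _).2 h1
    have c2 := (ZMod.natCast_eq_natCast_iff _ _ _).2 h2
    have hc : ((∑ i, sigvec w i * mweight m u i : ℕ) : ZMod m)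
        = ((∑ i, sigvec w i * mweight m v i : ℕ) : ZMod m) := by
      rw [c1, hsum, ← c2]
    push_cast at hc
    simp only [hd, mul_sub, Finset.sum_sub_distrib, sub_eq_zero]
    exact hc
  intro i
  by_cases hiS : i ∈ S
  · obtain ⟨hdef, hmin⟩ := hS
    have hw := hmin (S.erase i) (Finset.erase_ssubset hiS)
    push_neg at hw
    obtain ⟨w1, hw1, w2, hw2, hag, j, hj⟩ := hw
    have hdi : sigvec w1 i ≠ sigvec w2 i := by
      intro heq
      apply hj
      apply hdef w1 hw1 w2 hw2
      intro k hk
      by_cases hki : k = i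
      · subst hki; exact heq
      · exact hag k (Finset.mem_erase.2 ⟨hki, hk⟩)
    have h1 := key w1 hw1
    have h2 := key w2 hw2
    have hsum : ∑ k, ((sigvec w1 k : ZMod m) - sigvec w2 k) * d k = 0 := by
      simp only [sub_mul, Finset.sum_sub_distrib, h1, h2, sub_zero]
    have hterm : ∀ k, k ≠ i → ((sigvec w1 k : ZMod m) - sigvec w2 k) * d k = 0 := by
      intro k hki
      by_cases hkS : k ∈ S
      · have hk : sigvec w1 k = sigvec w2 k := hag k (Finset.mem_erase.2 ⟨hki, hkS⟩)
        simp [hk]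
      · have hk : d k = 0 := by simp [hd, hagree k hkS]
        simp [hk]
    have hi0 : ((sigvec w1 i : ZMod m) - sigvec w2 i) * d i = 0 :=
      (Fintype.sum_eq_single i hterm).symm.trans hsum
    have hDi : d i = 0 := by
      rcases Bool.eq_false_or_eq_true (w1 i).1 with hb1 | hb1 <;>
        rcases Bool.eq_false_or_eq_true (w2 i).1 with hb2 | hb2 <;>
        simp [sigvec, hb1, hb2] at hdi hi0 ⊢ <;>
        simpa using hi0
    have hcast : (mweight m u i : ZMod m) = (mweight m v i : ZMod m) :=
      sub_eq_zero.mp hDi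
    have hmod := (ZMod.natCast_eq_natCast_iff _ _ _).1 hcast
    have hum : mweight m u i < m := Nat.mod_lt _ (by omega)
    have hvm : mweight m v i < m := Nat.mod_lt _ (by omega)
    rw [Nat.ModEq, Nat.mod_eq_of_lt hum, Nat.mod_eq_of_lt hvm] at hmod
    exact hmod
  · exact hagree i hiS
end

section
/- Let m ≥ 2, t_top = max(r_top, s_top), and let L ⊆ A^n be a language with L × L ⊆ R^n (the symmetric inner-product relation modulo m). If S is a σ-defining set for L, then |L| ≤ (t_top + 1)^{n − |S|} · Σ_{k=0}^{|S|} C(|S|, k) · ⌈(s_top+1)/m⌉^k · ⌈(r_top+1)/m⌉^{|S|−k}. -/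
/-- Encoding map used for the injection. -/
def encAux (m sTop : ℕ) {n : ℕ} (S : Finset (Fin n)) (x : Fin n → Bool × ℕ) (i : Fin n) : ℕ :=
  if i ∈ S then (if (x i).1 then (x i).2 / m else (sTop + m) / m + (x i).2 / m)
  else (x i).2

/- Note: `(sTop + m) / m = ⌈(sTop + 1) / m⌉` for `m ≥ 1`. -/
theorem stmt_3 {n : ℕ} (m sTop rTop : ℕ) (hm : 2 ≤ m)
    (L : Finset (Fin n → Bool × ℕ))
    (hval : ∀ x ∈ L, validStr sTop rTop x)
    (hR : ∀ x ∈ L, ∀ y ∈ L, Rrel m x y)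
    (S : Finset (Fin n)) (hS : sigmaDefining (↑L) S) :
    L.card ≤ (max sTop rTop + 1) ^ (n - S.card) *
      ∑ k ∈ Finset.range (S.card + 1),
        S.card.choose k * ((sTop + m) / m) ^ k * ((rTop + m) / m) ^ (S.card - k) := by
  classical
  have hm0 : 0 < m := by omega
  set A := (sTop + m) / m with hA
  set B := (rTop + m) / m with hB
  set t := max sTop rTop with ht
  have hdiv : ∀ c v : ℕ, v ≤ c → v / m < (c + m) / m := by
    intro c v hv
    rw [Nat.add_div_right _ hm0]
    exact Nat.lt_succ_of_le (Nat.div_le_div_right hv)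
  -- recast the relation in ZMod m
  have hR' : ∀ x ∈ L, ∀ y ∈ L,
      (∑ i, (sigvec x i : ZMod m) * ((y i).2 : ZMod m)) =
       ∑ i, (sigvec y i : ZMod m) * ((x i).2 : ZMod m) := by
    intro x hx y hy
    have h2 : ((∑ i, sigvec x i * mweight m y i : ℕ) : ZMod m)
        = ((∑ i, sigvec y i * mweight m x i : ℕ) : ZMod m) :=
      (ZMod.natCast_eq_natCast_iff _ _ _).mpr (hR x hx y hy)
    push_cast [mweight, ZMod.natCast_mod] at h2
    simpa using h2
  -- key lemma: weights mod m are determined on S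
  have key : ∀ x ∈ L, ∀ y ∈ L, (∀ i, sigvec x i = sigvec y i) →
      (∀ i, i ∉ S → (x i).2 = (y i).2) →
      ∀ i ∈ S, (x i).2 % m = (y i).2 % m := by
    intro x hx y hy hσ hoff i0 hi0
    have hmin := hS.2 (S.erase i0) (Finset.erase_ssubset hi0)
    push_neg at hmin
    obtain ⟨u, hu, v, hv, hagree, j, hj⟩ := hmin
    have hu' : u ∈ L := hu
    have hv' : v ∈ L := hv
    have huv_i0 : sigvec u i0 ≠ sigvec v i0 := by
      intro he
      apply hj
      refine hS.1 u hu v hv (fun i hi => ?_) j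
      by_cases h : i = i0
      · subst h; exact he
      · exact hagree i (Finset.mem_erase.mpr ⟨h, hi⟩)
    have hsum : ∑ i, ((sigvec u i : ZMod m) - (sigvec v i : ZMod m)) *
        (((x i).2 : ZMod m) - ((y i).2 : ZMod m)) = 0 := by
      have e1 := hR' x hx u hu'
      have e2 := hR' y hy u hu'
      have e3 := hR' x hx v hv'
      have e4 := hR' y hy v hv'
      have hsc : ∀ i, (sigvec x i : ZMod m) = (sigvec y i : ZMod m) := fun i => by rw [hσ i]
      have expand : ∑ i, ((sigvec u i : ZMod m) - (sigvec v i : ZMod m)) *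
          (((x i).2 : ZMod m) - ((y i).2 : ZMod m))
          = ((∑ i, (sigvec u i : ZMod m) * ((x i).2 : ZMod m))
             - ∑ i, (sigvec v i : ZMod m) * ((x i).2 : ZMod m))
            - ((∑ i, (sigvec u i : ZMod m) * ((y i).2 : ZMod m))
             - ∑ i, (sigvec v i : ZMod m) * ((y i).2 : ZMod m)) := by
        rw [← Finset.sum_sub_distrib, ← Finset.sum_sub_distrib, ← Finset.sum_sub_distrib]
        exact Finset.sum_congr rfl fun i _ => by ring
      rw [expand, ← e1, ← e3, ← e2, ← e4]
      simp_rw [hsc]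
      ring
    have hsingle : ((sigvec u i0 : ZMod m) - (sigvec v i0 : ZMod m)) *
        (((x i0).2 : ZMod m) - ((y i0).2 : ZMod m)) = 0 := by
      rw [← hsum]
      symm
      apply Finset.sum_eq_single_of_mem i0 (Finset.mem_univ _)
      intro i _ hne
      by_cases hiS : i ∈ S
      · have h1 : sigvec u i = sigvec v i := hagree i (Finset.mem_erase.mpr ⟨hne, hiS⟩)
        rw [h1, sub_self, zero_mul]
      · rw [hoff i hiS, sub_self, mul_zero]
    have hcast : ((x i0).2 : ZMod m) = ((y i0).2 : ZMod m) := by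
      cases b1 : (u i0).1 <;> cases b2 : (v i0).1 <;>
        simp [sigvec, b1, b2, sub_eq_zero] at huv_i0 hsingle
      · exact hsingle.symm
      · exact hsingle
    exact (ZMod.natCast_eq_natCast_iff _ _ _).mp hcast
  -- the injection
  have hbool : ∀ x ∈ L, ∀ y ∈ L, encAux m sTop S x = encAux m sTop S y →
      ∀ i, sigvec x i = sigvec y i := by
    intro x hx y hy he
    apply hS.1 x (Finset.mem_coe.mpr hx) y (Finset.mem_coe.mpr hy)
    intro i hi
    have hexy : encAux m sTop S x i = encAux m sTop S y i := congrFun he i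
    simp only [encAux, if_pos hi] at hexy
    cases b1 : (x i).1 <;> cases b2 : (y i).1 <;>
      simp [sigvec, b1, b2] at hexy ⊢
    · -- x false (ρ), y true (σ)
      have hlt : (y i).2 / m < (sTop + m) / m := hdiv sTop _ ((hval y hy i).1 b2)
      exact absurd hexy.symm (Nat.ne_of_lt (lt_of_lt_of_le hlt (Nat.le_add_right _ _)))
    · -- x true (σ), y false (ρ)
      have hlt : (x i).2 / m < (sTop + m) / m := hdiv sTop _ ((hval x hx i).1 b1)
      exact absurd hexy (Nat.ne_of_lt (lt_of_lt_of_le hlt (Nat.le_add_right _ _)))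
  have hinj : Set.InjOn (encAux m sTop S) ↑L := by
    intro x hx y hy he
    have hx' : x ∈ L := hx
    have hy' : y ∈ L := hy
    have hσ := hbool x hx' y hy' he
    have hb : ∀ i, (x i).1 = (y i).1 := by
      intro i
      have h := hσ i
      cases b1 : (x i).1 <;> cases b2 : (y i).1 <;>
        simp [sigvec, b1, b2] at h ⊢
    have hoff : ∀ j, j ∉ S → (x j).2 = (y j).2 := by
      intro j hj
      have h := congrFun he j
      simpa [encAux, hj] using h
    funext i
    have hb2 : (x i).2 = (y i).2 := by
      by_cases hi : i ∈ S
      · have hmod := key x hx' y hy' hσ hoff i hi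
        have hdiveq : (x i).2 / m = (y i).2 / m := by
          have hexy : encAux m sTop S x i = encAux m sTop S y i := congrFun he i
          simp only [encAux, if_pos hi] at hexy
          rw [hb i] at hexy
          by_cases b2 : (y i).1 = true
          · simpa [b2] using hexy
          · simp only [b2, if_false] at hexy
            exact Nat.add_left_cancel hexy
        rw [← Nat.div_add_mod (x i).2 m, ← Nat.div_add_mod (y i).2 m, hmod, hdiveq]
      · exact hoff i hi
    exact Prod.ext (hb i) hb2
  have hmaps : ∀ x ∈ L, encAux m sTop S x ∈ Fintype.piFinset (fun i : Fin n =>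
      if i ∈ S then Finset.range (A + B) else Finset.range (t + 1)) := by
    intro x hx
    rw [Fintype.mem_piFinset]
    intro i
    by_cases hi : i ∈ S
    · simp only [encAux, if_pos hi, Finset.mem_range]
      by_cases b1 : (x i).1 = true
      · simp only [b1, if_true]
        exact lt_of_lt_of_le (hdiv sTop _ ((hval x hx i).1 b1)) (Nat.le_add_right _ _)
      · simp only [b1, if_false]
        exact Nat.add_lt_add_left (hdiv rTop _ ((hval x hx i).2 (by simpa using b1))) _
    · simp only [encAux, if_neg hi, Finset.mem_range]
      by_cases b1 : (x i).1 = true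
      · have := (hval x hx i).1 b1
        omega
      · have := (hval x hx i).2 (by simpa using b1)
        omega
  have hcard := Finset.card_le_card_of_injOn _ hmaps hinj
  have hT : (Fintype.piFinset fun i : Fin n =>
      if i ∈ S then Finset.range (A + B) else Finset.range (t + 1)).card
      = (A + B) ^ S.card * (t + 1) ^ (n - S.card) := by
    rw [Fintype.card_piFinset, ← Finset.prod_mul_prod_compl S]
    have h1 : ∏ i ∈ S, ((if i ∈ S then Finset.range (A + B) else Finset.range (t + 1)).card)
        = (A + B) ^ S.card := by
      rw [Finset.prod_congr rfl (fun i hi => by rw [if_pos hi, Finset.card_range]),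
        Finset.prod_const]
    have h2 : ∏ i ∈ Sᶜ, ((if i ∈ S then Finset.range (A + B) else Finset.range (t + 1)).card)
        = (t + 1) ^ (n - S.card) := by
      rw [Finset.prod_congr rfl (fun i hi => by
        rw [if_neg (Finset.mem_compl.mp hi), Finset.card_range]),
        Finset.prod_const, Finset.card_compl, Fintype.card_fin]
    rw [h1, h2]
  have hbin : (A + B) ^ S.card
      = ∑ k ∈ Finset.range (S.card + 1), S.card.choose k * A ^ k * B ^ (S.card - k) := by
    rw [add_pow]
    exact Finset.sum_congr rfl fun k _ => by push_cast; ring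
  calc L.card ≤ _ := hcard
    _ = (A + B) ^ S.card * (t + 1) ^ (n - S.card) := hT
    _ = (t + 1) ^ (n - S.card) *
        ∑ k ∈ Finset.range (S.card + 1), S.card.choose k * A ^ k * B ^ (S.card - k) := by
      rw [← hbin]; ring
end

section
/- Fix m ≥ 2, and for n ≥ 1 consider the language L₃ := {x ∈ A^n : the weight of x at every position is ≡ 0 (mod m)} over the alphabet A = {σ_0,...,σ_{s_top}, ρ_0,...,ρ_{r_top}}. Then L₃ × L₃ ⊆ R^n and |L₃| = (⌈(r_top+1)/m⌉ + ⌈(s_top+1)/m⌉)^n. In particular, |L₃| = (t_top+2)^n when m = 2, t_top := max(s_top,r_top) is even, and r_top = s_top = t_top. -/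
/-- The per-coordinate finset of allowed letters. -/
def letterF (m sTop rTop : ℕ) : Finset (Bool × ℕ) :=
  ((Finset.range ((sTop + m) / m)).image (fun j => (true, m * j))) ∪
  ((Finset.range ((rTop + m) / m)).image (fun j => (false, m * j)))

lemma mem_letterF {m sTop rTop : ℕ} (hm : 0 < m) (p : Bool × ℕ) :
    p ∈ letterF m sTop rTop ↔
      ((p.1 = true → p.2 ≤ sTop) ∧ (p.1 = false → p.2 ≤ rTop)) ∧ p.2 % m = 0 := by
  have key : ∀ t c : ℕ, (∃ j, j < (t + m) / m ∧ m * j = c) ↔ c ≤ t ∧ c % m = 0 := by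
    intro t c
    have hdiv : (t + m) / m = t / m + 1 := Nat.add_div_right t hm
    constructor
    · rintro ⟨j, hj, rfl⟩
      rw [hdiv, Nat.lt_succ_iff] at hj
      constructor
      · calc m * j ≤ m * (t / m) := Nat.mul_le_mul_left m hj
          _ ≤ t := Nat.mul_div_le t m
      · simp
    · rintro ⟨hle, hmod⟩
      refine ⟨c / m, ?_, ?_⟩
      · rw [hdiv, Nat.lt_succ_iff]
        exact Nat.div_le_div_right hle
      · exact Nat.mul_div_cancel' (Nat.dvd_of_mod_eq_zero hmod)
  obtain ⟨b, c⟩ := p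
  cases b <;>
    simp only [letterF, Finset.mem_union, Finset.mem_image, Finset.mem_range] <;>
    simp [Prod.ext_iff, key] <;> tauto

lemma card_letterF {m sTop rTop : ℕ} (hm : 0 < m) :
    (letterF m sTop rTop).card = (rTop + m) / m + (sTop + m) / m := by
  rw [letterF, Finset.card_union_of_disjoint, Finset.card_image_of_injective,
    Finset.card_image_of_injective, Finset.card_range, Finset.card_range, Nat.add_comm]
  · intro a b h
    simp only [Prod.mk.injEq] at h
    exact Nat.eq_of_mul_eq_mul_left hm h.2
  · intro a b h
    simp only [Prod.mk.injEq] at h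
    exact Nat.eq_of_mul_eq_mul_left hm h.2
  · simp only [Finset.disjoint_left, Finset.mem_image, Finset.mem_range]
    rintro p ⟨j, _, rfl⟩ ⟨k, _, h⟩
    simp at h

/- Note: `(sTop + m) / m = ⌈(sTop + 1) / m⌉` for `m ≥ 1`. -/
theorem stmt_6 {n : ℕ} (m sTop rTop : ℕ) (hm : 2 ≤ m) (hn : 1 ≤ n) :
    let L₃ : Set (Fin n → Bool × ℕ) :=
      {x | validStr sTop rTop x ∧ ∀ i, (x i).2 % m = 0}
    (∀ x ∈ L₃, ∀ y ∈ L₃, Rrel m x y) ∧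
    L₃.ncard = ((rTop + m) / m + (sTop + m) / m) ^ n ∧
    ((m = 2 ∧ Even (max sTop rTop) ∧ rTop = max sTop rTop ∧ sTop = max sTop rTop) →
      L₃.ncard = (max sTop rTop + 2) ^ n) := by
  have hm0 : 0 < m := by omega
  intro L₃
  have hcard : L₃.ncard = ((rTop + m) / m + (sTop + m) / m) ^ n := by
    have hset : L₃ = ↑(Fintype.piFinset fun _ : Fin n => letterF m sTop rTop) := by
      ext x
      simp only [L₃, Set.mem_setOf_eq, Finset.coe_sort_coe, Fintype.coe_piFinset,
        Set.mem_pi, Set.mem_univ, forall_true_left, Finset.mem_coe, validStr]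
      constructor
      · rintro ⟨h1, h2⟩ i
        exact (mem_letterF hm0 (x i)).2 ⟨h1 i, h2 i⟩
      · intro h
        exact ⟨fun i => ((mem_letterF hm0 (x i)).1 (h i)).1,
          fun i => ((mem_letterF hm0 (x i)).1 (h i)).2⟩
    rw [hset, Set.ncard_coe_finset, Fintype.card_piFinset]
    simp [card_letterF hm0]
  refine ⟨?_, hcard, ?_⟩
  · intro x hx y hy
    have hx0 : ∀ i, mweight m x i = 0 := fun i => hx.2 i
    have hy0 : ∀ i, mweight m y i = 0 := fun i => hy.2 i
    unfold Rrel
    simp [hx0, hy0]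
    rfl
  · rintro ⟨rfl, hev, hr, hs⟩
    rw [hcard, hr, hs]
    obtain ⟨k, hk⟩ := hev
    rw [hk]
    congr 1
    omega
end

section
/- Let L₁, L₂ ⊆ A^n be languages each satisfying Lᵢ × Lᵢ ⊆ R^n (the symmetric mod-m inner-product relation). Then the combination L₁ ⊕ L₂ also satisfies (L₁ ⊕ L₂) × (L₁ ⊕ L₂) ⊆ R^n, where x ⊕ y is defined positionwise by σ_i ⊕ σ_j = σ_{i+j} (when i+j ≤ s_top), ρ_i ⊕ ρ_j = ρ_{i+j} (when i+j ≤ r_top), and undefined otherwise, and L₁ ⊕ L₂ consists of all defined combinations x ⊕ y with x ∈ L₁, y ∈ L₂. -/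
/-- `x` and `y` can be joined: at every position they carry the same kind of state
(both σ or both ρ) and the subscripts sum to at most `sTop` resp. `rTop`. -/
def joinable (sTop rTop : ℕ) {n : ℕ} (x y : Fin n → Bool × ℕ) : Prop :=
  ∀ i, (x i).1 = (y i).1 ∧
    ((x i).1 = true → (x i).2 + (y i).2 ≤ sTop) ∧
    ((x i).1 = false → (x i).2 + (y i).2 ≤ rTop)

/-- The positionwise combination: σ_i ⊕ σ_j = σ_{i+j}, ρ_i ⊕ ρ_j = ρ_{i+j}. -/
def oplus {n : ℕ} (x y : Fin n → Bool × ℕ) : Fin n → Bool × ℕ :=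
  fun i => ((x i).1, (x i).2 + (y i).2)

/-- The combination of two languages: all defined combinations. -/
def comb (sTop rTop : ℕ) {n : ℕ} (L₁ L₂ : Set (Fin n → Bool × ℕ)) :
    Set (Fin n → Bool × ℕ) :=
  {z | ∃ x ∈ L₁, ∃ y ∈ L₂, joinable sTop rTop x y ∧ z = oplus x y}

/-- The key bilinear sum, valued in `ZMod m`. -/
def S (m : ℕ) {n : ℕ} (x y : Fin n → Bool × ℕ) : ZMod m :=
  ∑ i, (sigvec x i : ZMod m) * ((y i).2 : ZMod m)

lemma Rrel_iff_S (m : ℕ) {n : ℕ} (x y : Fin n → Bool × ℕ) :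
    Rrel m x y ↔ S m x y = S m y x := by
  unfold Rrel S
  rw [← ZMod.natCast_eq_natCast_iff]
  push_cast [mweight, ZMod.natCast_mod]
  rfl

lemma sigvec_congr {n : ℕ} {x y : Fin n → Bool × ℕ}
    (h : ∀ i, (x i).1 = (y i).1) : sigvec x = sigvec y := by
  funext i; simp [sigvec, h i]

theorem stmt_7 {n : ℕ} (m sTop rTop : ℕ) (hm : 2 ≤ m)
    (L₁ L₂ : Set (Fin n → Bool × ℕ))
    (hval₁ : ∀ x ∈ L₁, validStr sTop rTop x)
    (hval₂ : ∀ x ∈ L₂, validStr sTop rTop x)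
    (hR₁ : ∀ x ∈ L₁, ∀ y ∈ L₁, Rrel m x y)
    (hR₂ : ∀ x ∈ L₂, ∀ y ∈ L₂, Rrel m x y) :
    ∀ z ∈ comb sTop rTop L₁ L₂, ∀ z' ∈ comb sTop rTop L₁ L₂, Rrel m z z' := by
  rintro z ⟨x, hx, y, hy, hj, rfl⟩ z' ⟨x', hx', y', hy', hj', rfl⟩
  have hσ : sigvec (oplus x y) = sigvec x := rfl
  have hσ' : sigvec (oplus x' y') = sigvec x' := rfl
  have hxy : sigvec x = sigvec y := sigvec_congr (fun i => (hj i).1)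
  have hxy' : sigvec x' = sigvec y' := sigvec_congr (fun i => (hj' i).1)
  rw [Rrel_iff_S]
  have split : ∀ (a b c : Fin n → Bool × ℕ),
      S m a (oplus b c) = S m a b + S m a c := by
    intro a b c
    unfold S oplus
    rw [← Finset.sum_add_distrib]
    congr 1; funext i; push_cast; ring
  have Sσ : ∀ (a b c : Fin n → Bool × ℕ), sigvec a = sigvec b →
      S m a c = S m b c := by
    intro a b c h; unfold S; rw [h]
  rw [split, split]
  have h1 : S m x x' = S m x' x := (Rrel_iff_S m x x').mp (hR₁ x hx x' hx')
  have h2 : S m y y' = S m y' y := (Rrel_iff_S m y y').mp (hR₂ y hy y' hy')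
  have e1 : S m (oplus x y) x' = S m x x' := Sσ _ _ _ hσ
  have e2 : S m (oplus x y) y' = S m y y' := Sσ _ _ _ (hσ.trans hxy)
  have e1' : S m (oplus x' y') x = S m x' x := Sσ _ _ _ hσ'
  have e2' : S m (oplus x' y') y = S m y' y := Sσ _ _ _ (hσ'.trans hxy')
  rw [e1, e2, e1', e2', h1, h2]
end

section
/- Let c_1,...,c_ℓ, d_1,...,d_k be non-negative integers with Σᵢ c_i = Σⱼ d_j, and let a ≥ max{c_1,...,c_ℓ, d_1,...,d_k} be a natural number. Then there exists s₀ ≥ 0 such that for every s ≥ s₀ there is a bipartite graph G with parts V = {v_1,...,v_ℓ, x_1,...,x_s} and W = {w_1,...,w_k, y_1,...,y_s} in which deg(v_i) = c_i for all i, deg(w_j) = d_j for all j, and deg(x_i) = deg(y_i) = a for all i ∈ {1,...,s}. -/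
open Finset

/-- Prefix sums of a `Fin n`-indexed sequence, extended by 0. -/
def preSum (n : ℕ) (c : Fin n → ℕ) (m : ℕ) : ℕ :=
  ∑ i ∈ Finset.range m, (if h : i < n then c ⟨i, h⟩ else 0)

lemma preSum_mono (n : ℕ) (c : Fin n → ℕ) : Monotone (preSum n c) :=
  fun _ _ h => Finset.sum_le_sum_of_subset (Finset.range_subset_range.2 h)

lemma preSum_zero (n : ℕ) (c : Fin n → ℕ) : preSum n c 0 = 0 := by simp [preSum]

lemma preSum_succ (n : ℕ) (c : Fin n → ℕ) (m : ℕ) :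
    preSum n c (m + 1) = preSum n c m + (if h : m < n then c ⟨m, h⟩ else 0) :=
  Finset.sum_range_succ _ _

lemma preSum_self (n : ℕ) (c : Fin n → ℕ) : preSum n c n = ∑ i, c i := by
  rw [preSum, ← Fin.sum_univ_eq_sum_range]
  exact Finset.sum_congr rfl fun i _ => by simp [i.isLt]

/-- The edge predicate for the construction. -/
def Pdef (l k s a N : ℕ) (c : Fin l → ℕ) (d : Fin k → ℕ)
    (e : (Fin l ⊕ Fin s) × (Fin k ⊕ Fin s)) : Bool :=
  match e with
  | (Sum.inl _, Sum.inl _) => false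
  | (Sum.inl i, Sum.inr u) => decide (preSum l c i.val ≤ u.val ∧ u.val < preSum l c (i.val + 1))
  | (Sum.inr t, Sum.inl j) => decide (preSum k d j.val ≤ t.val ∧ t.val < preSum k d (j.val + 1))
  | (Sum.inr t, Sum.inr u) => decide ((u.val + s - t.val) % s < a ∧
      ¬((u.val + s - t.val) % s = 0 ∧ t.val < N))

lemma lem_card_filter_sum {α β : Type*} [Fintype α] [Fintype β]
    (Q : α ⊕ β → Prop) [DecidablePred Q] :
    (univ.filter Q).card
      = (univ.filter (fun x => Q (Sum.inl x))).card
        + (univ.filter (fun x => Q (Sum.inr x))).card := by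
  simp only [Finset.card_filter]
  rw [Fintype.sum_sum_type]

lemma lem_fiber1 {α β : Type*} [Fintype α] [Fintype β] [DecidableEq α]
    (P : α × β → Prop) [DecidablePred P] (x : α) :
    ((univ.filter P).filter (fun e => e.1 = x)).card
      = (univ.filter (fun w => P (x, w))).card := by
  refine Finset.card_bij' (fun e _ => e.2) (fun w _ => (x, w)) ?_ ?_ ?_ ?_
  · intro e he
    simp only [Finset.mem_filter, Finset.mem_univ, true_and] at he ⊢
    obtain ⟨hP, hx⟩ := he
    rw [← hx, Prod.mk.eta]; exact hP
  · intro w hw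
    simp only [Finset.mem_filter, Finset.mem_univ, true_and] at hw ⊢
    exact ⟨hw, trivial⟩
  · intro e he
    simp only [Finset.mem_filter, Finset.mem_univ, true_and] at he
    exact Prod.ext he.2.symm rfl
  · intro w _; rfl

lemma lem_fiber2 {α β : Type*} [Fintype α] [Fintype β] [DecidableEq β]
    (P : α × β → Prop) [DecidablePred P] (y : β) :
    ((univ.filter P).filter (fun e => e.2 = y)).card
      = (univ.filter (fun v => P (v, y))).card := by
  refine Finset.card_bij' (fun e _ => e.1) (fun v _ => (v, y)) ?_ ?_ ?_ ?_
  · intro e he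
    simp only [Finset.mem_filter, Finset.mem_univ, true_and] at he ⊢
    obtain ⟨hP, hy⟩ := he
    rw [← hy, Prod.mk.eta]; exact hP
  · intro v hv
    simp only [Finset.mem_filter, Finset.mem_univ, true_and] at hv ⊢
    exact ⟨hv, trivial⟩
  · intro e he
    simp only [Finset.mem_filter, Finset.mem_univ, true_and] at he
    exact Prod.ext rfl he.2.symm
  · intro v _; rfl

lemma lem_fin_filter (s : ℕ) (p : ℕ → Prop) [DecidablePred p] :
    ((univ : Finset (Fin s)).filter (fun u => p u.val)).card
      = ((Finset.range s).filter p).card := by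
  refine Finset.card_bij' (fun u _ => u.val)
    (fun m hm => ⟨m, Finset.mem_range.mp (Finset.mem_filter.mp hm).1⟩) ?_ ?_ ?_ ?_
  · intro u hu
    simp only [Finset.mem_filter, Finset.mem_univ, true_and] at hu
    simp only [Finset.mem_filter, Finset.mem_range]
    exact ⟨u.isLt, hu⟩
  · intro m hm
    simp only [Finset.mem_filter, Finset.mem_univ, true_and]
    exact (Finset.mem_filter.mp hm).2
  · intro u _; rfl
  · intro m _; rfl

lemma lem_range_Ico (s x y : ℕ) (h : y ≤ s) :
    ((Finset.range s).filter (fun m => x ≤ m ∧ m < y)) = Finset.Ico x y := by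
  ext m
  simp only [Finset.mem_filter, Finset.mem_range, Finset.mem_Ico]
  omega

lemma lem_mod1 (s t D : ℕ) (ht : t < s) (hD : D < s) : ((t + D) % s + s - t) % s = D := by
  rcases lt_or_ge (t + D) s with h | h
  · rw [Nat.mod_eq_of_lt h, show t + D + s - t = D + s by omega, Nat.add_mod_right,
      Nat.mod_eq_of_lt hD]
  · have h2 : (t + D) % s = t + D - s := by
      rw [Nat.mod_eq_sub_mod h, Nat.mod_eq_of_lt (by omega)]
    rw [h2, show t + D - s + s - t = D by omega, Nat.mod_eq_of_lt hD]

lemma lem_mod2 (s t u : ℕ) (ht : t < s) (hu : u < s) : (t + (u + s - t) % s) % s = u := by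
  rcases lt_or_ge u t with h | h
  · rw [Nat.mod_eq_of_lt (by omega : u + s - t < s), show t + (u + s - t) = u + s by omega,
      Nat.add_mod_right, Nat.mod_eq_of_lt hu]
  · have h2 : (u + s - t) % s = u - t := by
      rw [Nat.mod_eq_sub_mod (by omega), show u + s - t - s = u - t by omega,
        Nat.mod_eq_of_lt (by omega)]
    rw [h2, show t + (u - t) = u by omega, Nat.mod_eq_of_lt hu]

lemma lem_mod3 (s u t : ℕ) (hu : u < s) (ht : t < s) : (u + s - (u + s - t) % s) % s = t := by
  rcases lt_or_ge u t with h | h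
  · rw [Nat.mod_eq_of_lt (by omega : u + s - t < s), show u + s - (u + s - t) = t by omega,
      Nat.mod_eq_of_lt ht]
  · have h2 : (u + s - t) % s = u - t := by
      rw [Nat.mod_eq_sub_mod (by omega), show u + s - t - s = u - t by omega,
        Nat.mod_eq_of_lt (by omega)]
    rw [h2, show u + s - (u - t) = t + s by omega, Nat.add_mod_right, Nat.mod_eq_of_lt ht]

lemma lem_mod0 (s t u : ℕ) (ht : t < s) (hu : u < s) : ((u + s - t) % s = 0 ↔ t = u) := by
  rcases lt_or_ge u t with h | h
  · rw [Nat.mod_eq_of_lt (by omega : u + s - t < s)]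
    omega
  · have h2 : (u + s - t) % s = u - t := by
      rw [Nat.mod_eq_sub_mod (by omega), show u + s - t - s = u - t by omega,
        Nat.mod_eq_of_lt (by omega)]
    rw [h2]; omega

lemma lem_count_target (a : ℕ) (cnd : Prop) [Decidable cnd] :
    ((Finset.range a).filter (fun D => ¬(D = 0 ∧ cnd))).card
      = a - (if cnd then 1 else 0) := by
  by_cases h : cnd
  · simp only [h, and_true, if_pos]
    have h2 : (Finset.range a).filter (fun D => ¬D = 0) = Finset.Ico 1 a := by
      ext m
      simp only [Finset.mem_filter, Finset.mem_range, Finset.mem_Ico]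
      omega
    rw [h2, Nat.card_Ico]
  · simp [h]

lemma lem_mod_count (s a N t : ℕ) (ht : t < s) (has : a ≤ s) :
    ((Finset.range s).filter
        (fun u => (u + s - t) % s < a ∧ ¬((u + s - t) % s = 0 ∧ t < N))).card
      = a - (if t < N then 1 else 0) := by
  rw [← lem_count_target a (t < N)]
  refine Finset.card_bij' (fun u _ => (u + s - t) % s) (fun D _ => (t + D) % s) ?_ ?_ ?_ ?_
  · intro u hu
    simp only [Finset.mem_filter, Finset.mem_range] at hu ⊢
    exact ⟨hu.2.1, hu.2.2⟩
  · intro D hD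
    simp only [Finset.mem_filter, Finset.mem_range] at hD ⊢
    have hDs : D < s := lt_of_lt_of_le hD.1 has
    have h1 : ((t + D) % s + s - t) % s = D := lem_mod1 s t D ht hDs
    exact ⟨Nat.mod_lt _ (by omega), by rw [h1]; exact ⟨hD.1, hD.2⟩⟩
  · intro u hu
    simp only [Finset.mem_filter, Finset.mem_range] at hu
    exact lem_mod2 s t u ht hu.1
  · intro D hD
    simp only [Finset.mem_filter, Finset.mem_range] at hD
    exact lem_mod1 s t D ht (lt_of_lt_of_le hD.1 has)

lemma lem_mod_count' (s a N u : ℕ) (hu : u < s) (has : a ≤ s) :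
    ((Finset.range s).filter
        (fun t => (u + s - t) % s < a ∧ ¬((u + s - t) % s = 0 ∧ t < N))).card
      = a - (if u < N then 1 else 0) := by
  rw [← lem_count_target a (u < N)]
  refine Finset.card_bij' (fun t _ => (u + s - t) % s) (fun D _ => (u + s - D) % s) ?_ ?_ ?_ ?_
  · intro t ht
    simp only [Finset.mem_filter, Finset.mem_range] at ht ⊢
    refine ⟨ht.2.1, ?_⟩
    rintro ⟨hD0, huN⟩
    exact ht.2.2 ⟨hD0, by rwa [(lem_mod0 s t u ht.1 hu).mp hD0]⟩
  · intro D hD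
    simp only [Finset.mem_filter, Finset.mem_range] at hD ⊢
    have hDs : D < s := lt_of_lt_of_le hD.1 has
    have h3 : (u + s - (u + s - D) % s) % s = D := lem_mod3 s u D hu hDs
    refine ⟨Nat.mod_lt _ (by omega), by rw [h3]; exact hD.1, ?_⟩
    rw [h3]
    rintro ⟨hD0, htN⟩
    subst hD0
    apply hD.2
    refine ⟨rfl, ?_⟩
    rwa [show u + s - 0 = u + s by omega, Nat.add_mod_right, Nat.mod_eq_of_lt hu] at htN
  · intro t ht
    simp only [Finset.mem_filter, Finset.mem_range] at ht
    exact lem_mod3 s u t hu ht.1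
  · intro D hD
    simp only [Finset.mem_filter, Finset.mem_range] at hD
    exact lem_mod3 s u D hu (lt_of_lt_of_le hD.1 has)

lemma lem_interval (F : ℕ → ℕ) (hF : Monotone F) (hF0 : F 0 = 0) (k t : ℕ) :
    ((univ : Finset (Fin k)).filter (fun j => F j.val ≤ t ∧ t < F (j.val + 1))).card
      = if t < F k then 1 else 0 := by
  split_ifs with h
  · have hex : ∃ m, t < F m := ⟨k, h⟩
    have hm : t < F (Nat.find hex) := Nat.find_spec hex
    have hm0 : Nat.find hex ≠ 0 := by
      intro h0
      rw [h0, hF0] at hm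
      omega
    obtain ⟨j, hj⟩ := Nat.exists_eq_succ_of_ne_zero hm0
    have hj2 : t < F (j + 1) := by
      rw [show j + 1 = Nat.find hex from by omega]
      exact hm
    have hj1 : F j ≤ t := le_of_not_gt (Nat.find_min hex (by omega))
    have hjk : j < k := by
      by_contra hk
      push_neg at hk
      have := hF hk
      omega
    rw [Finset.card_eq_one]
    refine ⟨⟨j, hjk⟩, ?_⟩
    ext j'
    simp only [Finset.mem_filter, Finset.mem_univ, true_and, Finset.mem_singleton]
    constructor
    · rintro ⟨h1, h2⟩
      have hval : j'.val = j := by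
        rcases Nat.lt_trichotomy j'.val j with hlt | heq | hgt
        · have := hF (show j'.val + 1 ≤ j by omega)
          omega
        · exact heq
        · have := hF (show j + 1 ≤ j'.val by omega)
          omega
      exact Fin.ext hval
    · rintro rfl
      exact ⟨hj1, hj2⟩
  · rw [Finset.card_eq_zero, Finset.filter_eq_empty_iff]
    intro j _
    rintro ⟨h1, h2⟩
    have := hF (show j.val + 1 ≤ k from j.isLt)
    omega

theorem stmt_10 (l k : ℕ) (c : Fin l → ℕ) (d : Fin k → ℕ) (a : ℕ)
    (hsum : ∑ i, c i = ∑ j, d j)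
    (hca : ∀ i, c i ≤ a) (hda : ∀ j, d j ≤ a) :
    ∃ s₀ : ℕ, ∀ s : ℕ, s₀ ≤ s →
      ∃ E : Finset ((Fin l ⊕ Fin s) × (Fin k ⊕ Fin s)),
        (∀ i : Fin l, (E.filter (fun e => e.1 = Sum.inl i)).card = c i) ∧
        (∀ i : Fin s, (E.filter (fun e => e.1 = Sum.inr i)).card = a) ∧
        (∀ j : Fin k, (E.filter (fun e => e.2 = Sum.inl j)).card = d j) ∧
        (∀ j : Fin s, (E.filter (fun e => e.2 = Sum.inr j)).card = a) := by
  classical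
  set N := ∑ i, c i with hN
  refine ⟨max a N, fun s hs => ?_⟩
  have has : a ≤ s := le_trans (le_max_left _ _) hs
  have hNs : N ≤ s := le_trans (le_max_right _ _) hs
  have hFl : preSum l c l = N := preSum_self l c
  have hGk : preSum k d k = N := by rw [preSum_self k d, ← hsum]
  have ha1 : 0 < N → 1 ≤ a := by
    intro h
    by_contra h'
    push_neg at h'
    have hz : N = 0 := by
      rw [hN]
      apply Finset.sum_eq_zero
      intro i _
      have := hca i
      omega
    omega
  refine ⟨univ.filter (fun e => Pdef l k s a N c d e = true), ?_, ?_, ?_, ?_⟩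
  · -- degrees of v_i
    intro i
    rw [lem_fiber1 (fun e => Pdef l k s a N c d e = true) (Sum.inl i), lem_card_filter_sum]
    have h1 : ((univ : Finset (Fin k)).filter
        (fun x => Pdef l k s a N c d (Sum.inl i, Sum.inl x) = true)).card = 0 := by
      simp [Pdef]
    have h2 : ((univ : Finset (Fin s)).filter
        (fun x => Pdef l k s a N c d (Sum.inl i, Sum.inr x) = true)).card = c i := by
      simp only [Pdef, decide_eq_true_eq]
      rw [lem_fin_filter s (fun m => preSum l c i.val ≤ m ∧ m < preSum l c (i.val + 1)),
        lem_range_Ico _ _ _ (le_trans (by rw [← hFl]; exact preSum_mono l c i.isLt) hNs),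
        Nat.card_Ico, preSum_succ]
      simp [i.isLt]
    omega
  · -- degrees of x_t
    intro t
    rw [lem_fiber1 (fun e => Pdef l k s a N c d e = true) (Sum.inr t), lem_card_filter_sum]
    have h1 : ((univ : Finset (Fin k)).filter
        (fun x => Pdef l k s a N c d (Sum.inr t, Sum.inl x) = true)).card
        = if t.val < N then 1 else 0 := by
      simp only [Pdef, decide_eq_true_eq]
      rw [lem_interval (preSum k d) (preSum_mono k d) (preSum_zero k d) k t.val, hGk]
    have h2 : ((univ : Finset (Fin s)).filter
        (fun x => Pdef l k s a N c d (Sum.inr t, Sum.inr x) = true)).card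
        = a - (if t.val < N then 1 else 0) := by
      simp only [Pdef, decide_eq_true_eq]
      rw [lem_fin_filter s (fun m => (m + s - t.val) % s < a ∧
        ¬((m + s - t.val) % s = 0 ∧ t.val < N))]
      exact lem_mod_count s a N t.val t.isLt has
    rw [h1, h2]
    split_ifs with h
    · have := ha1 (by omega)
      omega
    · omega
  · -- degrees of w_j
    intro j
    rw [lem_fiber2 (fun e => Pdef l k s a N c d e = true) (Sum.inl j), lem_card_filter_sum]
    have h1 : ((univ : Finset (Fin l)).filter
        (fun x => Pdef l k s a N c d (Sum.inl x, Sum.inl j) = true)).card = 0 := by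
      simp [Pdef]
    have h2 : ((univ : Finset (Fin s)).filter
        (fun x => Pdef l k s a N c d (Sum.inr x, Sum.inl j) = true)).card = d j := by
      simp only [Pdef, decide_eq_true_eq]
      rw [lem_fin_filter s (fun m => preSum k d j.val ≤ m ∧ m < preSum k d (j.val + 1)),
        lem_range_Ico _ _ _ (le_trans (by rw [← hGk]; exact preSum_mono k d j.isLt) hNs),
        Nat.card_Ico, preSum_succ]
      simp [j.isLt]
    omega
  · -- degrees of y_u
    intro u
    rw [lem_fiber2 (fun e => Pdef l k s a N c d e = true) (Sum.inr u), lem_card_filter_sum]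
    have h1 : ((univ : Finset (Fin l)).filter
        (fun x => Pdef l k s a N c d (Sum.inl x, Sum.inr u) = true)).card
        = if u.val < N then 1 else 0 := by
      simp only [Pdef, decide_eq_true_eq]
      rw [lem_interval (preSum l c) (preSum_mono l c) (preSum_zero l c) l u.val, hFl]
    have h2 : ((univ : Finset (Fin s)).filter
        (fun x => Pdef l k s a N c d (Sum.inr x, Sum.inr u) = true)).card
        = a - (if u.val < N then 1 else 0) := by
      simp only [Pdef, decide_eq_true_eq]
      rw [lem_fin_filter s (fun m => (u.val + s - m) % s < a ∧
        ¬((u.val + s - m) % s = 0 ∧ m < N))]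
      exact lem_mod_count' s a N u.val u.isLt has
    rw [h1, h2]
    split_ifs with h
    · have := ha1 (by omega)
      omega
    · omega
end

section
/- Suppose σ, ρ ⊆ ℕ are non-empty with s ∈ σ, r ∈ ρ, and r ≥ 1. Then there exists a graph G with a distinguished vertex u and two disjoint (σ,ρ)-sets X and Y with X ∪ Y = V(G), such that u ∈ X with |N(u) ∩ X| = s, and u ∉ Y with |N(u) ∩ Y| = r. In particular, the graph consisting of 2r cliques of order s+1 arranged so that corresponding vertices across the two groups of r cliques form complete bipartite graphs (with r vertices per side) has this property. -/
/-- `S` is a (σ,ρ)-set of `G`. -/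
def IsSigRhoSet {V : Type} (G : SimpleGraph V) (σ ρ : Set ℕ) (S : Set V) : Prop :=
  (∀ v ∈ S, (G.neighborSet v ∩ S).ncard ∈ σ) ∧
  (∀ v : V, v ∉ S → (G.neighborSet v ∩ S).ncard ∈ ρ)

/-- The graph made of `2r` cliques of order `s+1` (indexed by a side in `Fin 2` and a
clique index in `Fin r`), where vertices with the same inner index `j` on different
sides are joined, forming complete bipartite graphs indexwise. -/
def cliqueBlockGraph (r s : ℕ) : SimpleGraph (Fin 2 × Fin r × Fin (s + 1)) :=
  SimpleGraph.fromRel fun a b =>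
    (a.1 = b.1 ∧ a.2.1 = b.2.1) ∨ (a.1 ≠ b.1 ∧ a.2.2 = b.2.2)


lemma cbg_adj (r s : ℕ) (a b : Fin 2 × Fin r × Fin (s+1)) :
    (cliqueBlockGraph r s).Adj a b ↔ a ≠ b ∧
      ((a.1 = b.1 ∧ a.2.1 = b.2.1) ∨ (a.1 ≠ b.1 ∧ a.2.2 = b.2.2)) := by
  simp only [cliqueBlockGraph, SimpleGraph.fromRel_adj]
  constructor
  · rintro ⟨h, h1 | h1⟩
    · exact ⟨h, h1⟩
    · rcases h1 with ⟨h2, h3⟩ | ⟨h2, h3⟩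
      · exact ⟨h, Or.inl ⟨h2.symm, h3.symm⟩⟩
      · exact ⟨h, Or.inr ⟨fun e => h2 e.symm, h3.symm⟩⟩
  · rintro ⟨h, h1⟩
    exact ⟨h, Or.inl h1⟩

lemma nbr_same (r s : ℕ) (i : Fin 2) (j : Fin r) (k : Fin (s+1)) :
    (cliqueBlockGraph r s).neighborSet (i,j,k) ∩ {a | a.1 = i}
      = (fun k' => (i,j,k')) '' {k}ᶜ := by
  ext ⟨i', j', k'⟩
  simp only [SimpleGraph.mem_neighborSet, cbg_adj, Set.mem_inter_iff, Set.mem_setOf_eq,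
    Set.mem_image, Set.mem_compl_iff, Set.mem_singleton_iff, ne_eq, Prod.mk.injEq]
  constructor
  · rintro ⟨⟨hne, h | h⟩, hi⟩
    · exact ⟨k', fun e => hne ⟨h.1, h.2, e.symm⟩, h.1, h.2, rfl⟩
    · exact absurd hi.symm h.1
  · rintro ⟨x, hx, rfl, rfl, rfl⟩
    exact ⟨⟨fun e => hx e.2.2.symm, Or.inl ⟨rfl, rfl⟩⟩, rfl⟩

lemma nbr_other (r s : ℕ) (i i' : Fin 2) (hii : i' ≠ i) (j : Fin r) (k : Fin (s+1)) :
    (cliqueBlockGraph r s).neighborSet (i',j,k) ∩ {a | a.1 = i}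
      = (fun j' => (i,j',k)) '' Set.univ := by
  ext ⟨i₀, j₀, k₀⟩
  simp only [SimpleGraph.mem_neighborSet, cbg_adj, Set.mem_inter_iff, Set.mem_setOf_eq,
    Set.mem_image, Set.mem_univ, true_and, ne_eq, Prod.mk.injEq]
  constructor
  · rintro ⟨⟨hne, h | h⟩, hi⟩
    · exact absurd (h.1.trans hi) hii
    · exact ⟨j₀, hi.symm, rfl, h.2⟩
  · rintro ⟨x, rfl, rfl, rfl⟩
    exact ⟨⟨fun e => hii e.1, Or.inr ⟨hii, rfl⟩⟩, rfl⟩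

lemma ncard_same (r s : ℕ) (i : Fin 2) (j : Fin r) (k : Fin (s+1)) :
    ((cliqueBlockGraph r s).neighborSet (i,j,k) ∩ {a | a.1 = i}).ncard = s := by
  rw [nbr_same, Set.ncard_image_of_injective _ (fun a b h => by
    simpa [Prod.mk.injEq] using h)]
  have := Set.ncard_add_ncard_compl ({k} : Set (Fin (s+1)))
  simp [Set.ncard_singleton, Nat.card_eq_fintype_card] at this
  omega

lemma ncard_other (r s : ℕ) (i i' : Fin 2) (hii : i' ≠ i) (j : Fin r) (k : Fin (s+1)) :
    ((cliqueBlockGraph r s).neighborSet (i',j,k) ∩ {a | a.1 = i}).ncard = r := by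
  rw [nbr_other r s i i' hii, Set.ncard_image_of_injective _ (fun a b h => by
    simpa [Prod.mk.injEq] using h)]
  simp [Set.ncard_univ]

theorem stmt_11 (σ ρ : Set ℕ) (s r : ℕ) (hs : s ∈ σ) (hr : r ∈ ρ) (hr1 : 1 ≤ r) :
    (∃ (V : Type) (_ : Fintype V) (G : SimpleGraph V) (u : V) (X Y : Set V),
      Disjoint X Y ∧ X ∪ Y = Set.univ ∧
      IsSigRhoSet G σ ρ X ∧ IsSigRhoSet G σ ρ Y ∧
      u ∈ X ∧ (G.neighborSet u ∩ X).ncard = s ∧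
      u ∉ Y ∧ (G.neighborSet u ∩ Y).ncard = r) ∧
    (let G := cliqueBlockGraph r s
     let u : Fin 2 × Fin r × Fin (s + 1) := (0, ⟨0, hr1⟩, 0)
     let X : Set (Fin 2 × Fin r × Fin (s + 1)) := {a | a.1 = 0}
     let Y : Set (Fin 2 × Fin r × Fin (s + 1)) := {a | a.1 = 1}
     Disjoint X Y ∧ X ∪ Y = Set.univ ∧
     IsSigRhoSet G σ ρ X ∧ IsSigRhoSet G σ ρ Y ∧
     u ∈ X ∧ (G.neighborSet u ∩ X).ncard = s ∧
     u ∉ Y ∧ (G.neighborSet u ∩ Y).ncard = r) := by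
  have hsig : ∀ i : Fin 2, IsSigRhoSet (cliqueBlockGraph r s) σ ρ {a | a.1 = i} := by
    intro i
    constructor
    · rintro ⟨i', j, k⟩ hv
      have : i' = i := hv
      subst this
      rw [ncard_same]; exact hs
    · rintro ⟨i', j, k⟩ hv
      have hii : i' ≠ i := hv
      rw [ncard_other r s i i' hii]; exact hr
  have hdisj : Disjoint {a : Fin 2 × Fin r × Fin (s+1) | a.1 = 0} {a | a.1 = 1} := by
    rw [Set.disjoint_left]
    rintro a (h0 : a.1 = 0) (h1 : a.1 = 1)
    rw [h0] at h1; exact absurd h1 (by decide)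
  have huniv : ({a : Fin 2 × Fin r × Fin (s+1) | a.1 = 0} ∪ {a | a.1 = 1}) = Set.univ := by
    ext a
    simp only [Set.mem_union, Set.mem_setOf_eq, Set.mem_univ, iff_true]
    omega
  have hcs : ((cliqueBlockGraph r s).neighborSet (0, ⟨0, hr1⟩, 0) ∩ {a | a.1 = 0}).ncard = s :=
    ncard_same r s 0 ⟨0, hr1⟩ 0
  have hcr : ((cliqueBlockGraph r s).neighborSet (0, ⟨0, hr1⟩, 0) ∩ {a | a.1 = 1}).ncard = r :=
    ncard_other r s 1 0 (by decide) ⟨0, hr1⟩ 0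
  refine ⟨⟨_, inferInstance, cliqueBlockGraph r s, (0, ⟨0, hr1⟩, 0), _, _,
      hdisj, huniv, hsig 0, hsig 1, rfl, hcs, (by decide : ¬((0 : Fin 2) = 1)), hcr⟩,
    hdisj, huniv, hsig 0, hsig 1, rfl, hcs, (by decide : ¬((0 : Fin 2) = 1)), hcr⟩
end

section
/- Let σ, ρ ⊆ ℕ with s_min := min σ = 0 and r_min := min ρ ≥ 1, and let r_top := max ρ be finite. Let H be the complete bipartite graph with parts A of size r_min and B of size r_top + 1, and let u ∈ A. Then in every (σ,ρ)-set S of H, the vertex u is contained in S; moreover, the set A is a (σ,ρ)-set of H in which u has 0 selected neighbors. -/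
theorem stmt_13 (σ ρ : Set ℕ) (h0 : 0 ∈ σ) (hρne : ρ.Nonempty) (hρfin : ρ.Finite)
    (hrmin : 1 ≤ sInf ρ) :
    let rMin := sInf ρ
    let rTop := sSup ρ
    let H := completeBipartiteGraph (Fin rMin) (Fin (rTop + 1))
    let A : Set (Fin rMin ⊕ Fin (rTop + 1)) := Set.range Sum.inl
    (∀ u : Fin rMin, ∀ S : Set (Fin rMin ⊕ Fin (rTop + 1)),
        IsSigRhoSet H σ ρ S → Sum.inl u ∈ S) ∧
    IsSigRhoSet H σ ρ A ∧
    (∀ u : Fin rMin, (H.neighborSet (Sum.inl u) ∩ A).ncard = 0) := by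
  intro rMin rTop H A
  have hmem_inf : sInf ρ ∈ ρ := Nat.sInf_mem hρne
  have hNl : ∀ u : Fin rMin, H.neighborSet (Sum.inl u) = Set.range Sum.inr := by
    intro u; ext w; cases w <;> simp [H, SimpleGraph.neighborSet]
  have hNr : ∀ b : Fin (rTop + 1), H.neighborSet (Sum.inr b) = Set.range Sum.inl := by
    intro b; ext w; cases w <;> simp [H, SimpleGraph.neighborSet]
  have hAcard : (Set.range (Sum.inl : Fin rMin → Fin rMin ⊕ Fin (rTop + 1))).ncard = rMin := by
    rw [← Nat.card_coe_set_eq, Nat.card_range_of_injective Sum.inl_injective,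
      Nat.card_eq_fintype_card, Fintype.card_fin]
  have hBcard : (Set.range (Sum.inr : Fin (rTop + 1) → Fin rMin ⊕ Fin (rTop + 1))).ncard
      = rTop + 1 := by
    rw [← Nat.card_coe_set_eq, Nat.card_range_of_injective Sum.inr_injective,
      Nat.card_eq_fintype_card, Fintype.card_fin]
  have hdisj : ∀ u : Fin rMin, (H.neighborSet (Sum.inl u) ∩ A).ncard = 0 := by
    intro u
    rw [hNl u]
    have he : Set.range (Sum.inr : Fin (rTop + 1) → Fin rMin ⊕ Fin (rTop + 1)) ∩ A = ∅ := by
      ext w; cases w <;> simp [A]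
    rw [he, Set.ncard_empty]
  refine ⟨?_, ⟨?_, ?_⟩, hdisj⟩
  · intro u S hS
    by_contra hu
    obtain ⟨h1, h2⟩ := hS
    have hB := h2 _ hu
    rw [hNl u] at hB
    have hexists : ∃ b : Fin (rTop + 1), Sum.inr b ∉ S := by
      by_contra hall
      push_neg at hall
      have heq : Set.range (Sum.inr : Fin (rTop + 1) → Fin rMin ⊕ Fin (rTop + 1)) ∩ S
          = Set.range Sum.inr := by
        apply Set.inter_eq_left.2
        rintro w ⟨b, rfl⟩; exact hall b
      rw [heq, hBcard] at hB
      have := le_csSup hρfin.bddAbove hB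
      omega
    obtain ⟨b, hb⟩ := hexists
    have hA := h2 _ hb
    rw [hNr b] at hA
    have hle : rMin ≤ (Set.range Sum.inl ∩ S).ncard := Nat.sInf_le hA
    have heq : Set.range Sum.inl ∩ S = Set.range Sum.inl :=
      Set.eq_of_subset_of_ncard_le Set.inter_subset_left
        (by rw [hAcard]; exact hle) (Set.toFinite _)
    have hmem : Sum.inl u ∈ Set.range Sum.inl ∩ S := by
      rw [heq]; exact Set.mem_range_self u
    exact hu hmem.2
  · intro v hv
    obtain ⟨a, rfl⟩ := hv
    rw [hdisj a]
    exact h0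
  · intro v hv
    match v with
    | Sum.inl a => exact absurd (Set.mem_range_self a) hv
    | Sum.inr b =>
      rw [hNr b]
      have heq : Set.range (Sum.inl : Fin rMin → Fin rMin ⊕ Fin (rTop + 1)) ∩ A
          = Set.range Sum.inl := by simp [A]
      rw [heq, hAcard]
      exact hmem_inf
end
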